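/- Suppose K̃ = VΛV̄ with V unitary, symmetric, and V_{:,0} = 𝟙/√n, Λ diagonal with positive real entries, and Λ𝟙 = √n V̄ K̃_{:,0}. If additionally K̃ is real with 𝟙ᵀK̃ = (𝟙ᵀK̃_{:,0})𝟙ᵀ (constant row sums), then the optimal NMLL prior mean τ = (𝟙ᵀK̃⁻¹y)/(𝟙ᵀK̃⁻¹𝟙) equals the sample mean 𝟙ᵀy/n. -/
import Mathlib

open Matrix

/-- For a real Gram matrix `K̃` with fast-transform eigendecomposition `K̃ = VΛV̄`
(`V` unitary, symmetric, constant zeroth column `𝟙/√n`; `Λ` diagonal with positive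
real entries; `Λ𝟙 = √n V̄ K̃_{:,0}`) and constant row sums, the optimal NMLL prior
mean `(𝟙ᵀK̃⁻¹y)/(𝟙ᵀK̃⁻¹𝟙)` equals the sample mean `𝟙ᵀy/n`. -/
theorem fast_gp_optimal_prior_mean_is_sample_mean (n : ℕ) [NeZero n]
    (V : Matrix (Fin n) (Fin n) ℂ)
    (hV : V ∈ Matrix.unitaryGroup (Fin n) ℂ) (hsym : Vᵀ = V)
    (hcol : ∀ i, V i 0 = ((Real.sqrt n : ℝ) : ℂ)⁻¹)
    (Λ : Fin n → ℂ) (hΛpos : ∀ j, 0 < (Λ j).re ∧ (Λ j).im = 0)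
    (K : Matrix (Fin n) (Fin n) ℝ)
    (hreal : V * Matrix.diagonal Λ * V.map (starRingEnd ℂ) = K.map Complex.ofReal)
    (hΛ : ∀ j, Λ j = ((Real.sqrt n : ℝ) : ℂ) *
      ((V.map (starRingEnd ℂ)) *ᵥ (fun i => (K.map Complex.ofReal) i 0)) j)
    (hrows : ∀ j, ∑ i, K i j = ∑ i, K i 0)
    (y : Fin n → ℝ) :
    ((1 : Fin n → ℝ) ⬝ᵥ (K⁻¹ *ᵥ y)) / ((1 : Fin n → ℝ) ⬝ᵥ (K⁻¹ *ᵥ (1 : Fin n → ℝ)))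
      = (∑ i, y i) / n := by
  set s : ℝ := ∑ i, K i 0 with hs
  have hn : (0:ℝ) < n := Nat.cast_pos.mpr (Nat.pos_of_ne_zero (NeZero.ne n))
  have hsqrt : ((Real.sqrt n : ℝ) : ℂ) ≠ 0 := by
    simp only [ne_eq, Complex.ofReal_eq_zero]
    positivity
  have hV0 : ∀ i, V 0 i = ((Real.sqrt n : ℝ) : ℂ)⁻¹ := fun i =>
    ((congrFun (congrFun hsym 0) i).symm.trans (hcol i))
  -- Λ 0 = s
  have hΛ0 : Λ 0 = (s : ℂ) := by
    rw [hΛ 0]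
    simp only [Matrix.mulVec, dotProduct, Matrix.map_apply, hV0, map_inv₀,
      Complex.conj_ofReal]
    rw [← Finset.mul_sum, ← mul_assoc, mul_inv_cancel₀ hsqrt, one_mul, hs,
      Complex.ofReal_sum]
  have hspos : (0:ℝ) < s := by
    have := (hΛpos 0).1
    rwa [hΛ0, Complex.ofReal_re] at this
  have hsne : s ≠ 0 := ne_of_gt hspos
  -- determinant nonzero
  have hVdet : V.det ≠ 0 := by
    have h1 : V * star V = 1 := (Matrix.mem_unitaryGroup_iff.mp hV)
    intro h
    have := congrArg Matrix.det h1
    rw [Matrix.det_mul, h, zero_mul, Matrix.det_one] at this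
    exact zero_ne_one this
  have hΛne : ∀ j, Λ j ≠ 0 := fun j h => by
    have := (hΛpos j).1
    rw [h] at this; simp at this
  have hdet : IsUnit K.det := by
    rw [isUnit_iff_ne_zero]
    intro h
    have h1 : (K.map (Complex.ofReal)).det = (K.det : ℂ) :=
      (RingHom.map_det Complex.ofRealHom K).symm
    rw [← hreal] at h1
    have hmap : (V.map ⇑(starRingEnd ℂ)).det = (starRingEnd ℂ) V.det :=
      ((starRingEnd ℂ).map_det V).symm
    rw [Matrix.det_mul, Matrix.det_mul, Matrix.det_diagonal, hmap] at h1
    have hz : (K.det : ℂ) = 0 := by rw [h]; simp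
    rw [hz] at h1
    rcases mul_eq_zero.mp h1 with h2 | h2
    · rcases mul_eq_zero.mp h2 with h3 | h3
      · exact hVdet h3
      · exact (Finset.prod_ne_zero_iff.mpr fun j _ => hΛne j) h3
    · exact hVdet (by simpa using h2)
  -- vecMul 1 K = s • 1
  have hrow : Matrix.vecMul (1 : Fin n → ℝ) K = s • (1 : Fin n → ℝ) := by
    funext j
    simp [Matrix.vecMul, dotProduct, hrows j, hs]
  have hinv : Matrix.vecMul (1 : Fin n → ℝ) K⁻¹ = s⁻¹ • (1 : Fin n → ℝ) := by
    have h2 := congrArg (fun v => Matrix.vecMul v K⁻¹) hrow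
    simp only [Matrix.vecMul_vecMul] at h2
    rw [Matrix.mul_nonsing_inv _ hdet, Matrix.vecMul_one, Matrix.smul_vecMul] at h2
    have h3 := congrArg (fun v : Fin n → ℝ => s⁻¹ • v) h2
    simp only [smul_smul, inv_mul_cancel₀ hsne, one_smul] at h3
    exact h3.symm
  have hnum : ∀ v : Fin n → ℝ, (1 : Fin n → ℝ) ⬝ᵥ (K⁻¹ *ᵥ v) = s⁻¹ * ∑ i, v i := by
    intro v
    rw [Matrix.dotProduct_mulVec, hinv]
    simp [dotProduct, Finset.mul_sum]
  rw [hnum, hnum]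
  have h1sum : ∑ i : Fin n, (1 : Fin n → ℝ) i = (n : ℝ) := by simp
  rw [h1sum]
  rw [mul_div_mul_left _ _ (inv_ne_zero hsne)]
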